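/- For any nonempty loopless matroid M, Σ_{F ∈ L(M)} t^{rk F} · χ_{M^F}(1/t) · χ_{M_F}(t) = 0 as an identity of Laurent polynomials (equivalently, rational functions) in t, where the sum is over all flats F of M (including ∅ and the whole ground set). -/

import Mathlib

open scoped Matroid

variable {α : Type*}

/-- The rank of a set in a matroid: the maximum size of an independent subset of the set. -/
noncomputable def Matroid.rkSet (M : Matroid α) (S : Set α) : ℕ :=
  ⨆ I : {I : Set α // M.Indep I ∧ I ⊆ S}, I.1.ncard

/-- The rank of a matroid: the rank of its ground set. -/
noncomputable def Matroid.rank (M : Matroid α) : ℕ := M.rkSet M.E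

/-- Deletion of a set from a matroid. -/
noncomputable def Matroid.del (M : Matroid α) (D : Set α) : Matroid α := M ↾ (M.E \ D)

/-- Contraction of a matroid by a set, defined via duality: `M / C = (M✶ \ C)✶`. -/
noncomputable def Matroid.con (M : Matroid α) (C : Set α) : Matroid α := (M✶.del C)✶

/-- A matroid is loopless if every singleton of the ground set is independent. -/
def Matroid.IsLoopless (M : Matroid α) : Prop := ∀ e ∈ M.E, M.Indep {e}

/-- A matroid is simple if every (at most two-element) subset `{e, f}` of the ground set is
independent. -/
def Matroid.IsSimple (M : Matroid α) : Prop := ∀ e ∈ M.E, ∀ f ∈ M.E, M.Indep {e, f}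

/-- The characteristic polynomial of a matroid, as a function of `t`, given by the
Whitney rank-generating-function formula `χ_M(t) = ∑_{S ⊆ E} (-1)^|S| t^(rk M - rk S)`
(which agrees with the Möbius-function definition for loopless matroids). -/
noncomputable def Matroid.charPoly (M : Matroid α) (t : ℚ) : ℚ :=
  ∑ᶠ (S : Set α) (_ : S ⊆ M.E), (-1 : ℚ) ^ S.ncard * t ^ (M.rank - M.rkSet S)

/-- The beta invariant of a matroid, via Crapo's formula
`β(M) = (-1)^(rk M) ∑_{S ⊆ E} (-1)^|S| rk S`. -/
noncomputable def Matroid.betaInv (M : Matroid α) : ℚ :=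
  (-1 : ℚ) ^ M.rank * ∑ᶠ (S : Set α) (_ : S ⊆ M.E), (-1 : ℚ) ^ S.ncard * (M.rkSet S : ℚ)

/-- The invariant `c_M = -2^(rk M) · χ_M(1/2)`. -/
noncomputable def Matroid.cInv (M : Matroid α) : ℚ :=
  - 2 ^ M.rank * M.charPoly (1/2)

/-!
Expanding `t ^ rk F · χ_{M^F}(1/t)` by the Whitney formula gives `∑_{A ⊆ F} (-1)^|A| t^(rk A)`.
Exchanging the order of summation, the coefficient of `(-1)^|A| t^(rk A)` becomes
`∑_{F ⊇ cl A} χ_{M_F}(t)`, and this equals `t^(rk M - rk A)`: it is the Möbius inversion of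
`χ_{M_F}(t) = ∑_{H ⊇ F} μ(F, H) t^(rk M - rk H)`, where the Möbius function of `L(M)` is obtained
from the Boolean lattice by grouping the sets `B ⊆ E \ F` according to the flat `cl (F ∪ B)`.
Hence the whole sum is `t^(rk M) ∑_{A ⊆ E} (-1)^|A|`, which vanishes since `E ≠ ∅`.
-/

open Set

lemma finsum_subset_eq_sum {R : Type*} [AddCommMonoid R] {X : Set α} (hX : X.Finite)
    (f : Set α → R) : ∑ᶠ (S : Set α) (_ : S ⊆ X), f S = ∑ S ∈ hX.powerset.toFinset, f S :=
  finsum_cond_eq_sum_of_cond_iff f fun _ => by simp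

lemma finsum_subset_neg_one_pow_ncard {R : Type*} [Ring R] {X : Set α} (hX : X.Finite) :
    ∑ᶠ (S : Set α) (_ : S ⊆ X), (-1 : R) ^ S.ncard = if X = ∅ then 1 else 0 := by
  classical
  lift X to Finset α using hX
  have hsub : ∀ {S : Set α}, S ⊆ X ↔ S ∈ X.powerset.image (↑) := fun {S} => by
    refine ⟨fun hS => ?_, fun hS => ?_⟩
    · lift S to Finset α using X.finite_toSet.subset hS
      exact Finset.mem_image_of_mem _ (Finset.mem_powerset.2 (Finset.coe_subset.1 hS))
    · obtain ⟨T, hT, rfl⟩ := Finset.mem_image.1 hS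
      exact Finset.coe_subset.2 (Finset.mem_powerset.1 hT)
  have h := congrArg (Int.cast : ℤ → R) (Finset.sum_powerset_neg_one_pow_card (x := X))
  push_cast at h
  rw [finsum_cond_eq_sum_of_cond_iff _ fun _ => hsub,
    Finset.sum_image fun _ _ _ _ => Finset.coe_inj.1]
  simpa [Set.ncard_coe_finset] using h

namespace Matroid

variable {M : Matroid α} {X Y C R : Set α}

lemma con_eq_contract (M : Matroid α) (C : Set α) : M.con C = M ／ C := rfl

lemma contract_eRk_add_eRk (M : Matroid α) (hXC : Disjoint X C) :
    (M ／ C).eRk X + M.eRk C = M.eRk (X ∪ C) := by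
  obtain ⟨I, hI⟩ := M.exists_isBasis' C
  obtain ⟨J, hJ, hIJ⟩ :=
    hI.indep.subset_isBasis'_of_subset (X := X ∪ C) (hI.subset.trans subset_union_right)
  have hJC : (M ／ C).IsBasis' (J \ C) X := by
    simpa [union_sdiff_right, hXC.sdiff_eq_left] using
      hJ.contract_isBasis' hI (hJ.indep.subset (union_subset sdiff_subset hIJ))
  have hJI : J ∩ C = I :=
    (hI.eq_of_subset_indep (hJ.indep.subset inter_subset_left) (subset_inter hIJ hI.subset)
      inter_subset_right).symm
  rw [← hJC.encard_eq_eRk, ← hI.encard_eq_eRk, ← hJ.encard_eq_eRk, ← hJI,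
    encard_sdiff_add_encard_inter]

section RankFinite

variable [M.RankFinite]

lemma rkSet_eq_toNat_eRk (X : Set α) : M.rkSet X = (M.eRk X).toNat := by
  obtain ⟨I, hI⟩ := M.exists_isBasis' X
  have hle : ∀ J : {J : Set α // M.Indep J ∧ J ⊆ X}, J.1.ncard ≤ I.ncard := fun J => by
    rw [ncard_def, ncard_def, hI.encard_eq_eRk]
    exact ENat.toNat_le_toNat (J.2.1.encard_le_eRk_of_subset J.2.2)
      (M.isRkFinite_set X).eRk_lt_top.ne
  rw [← hI.encard_eq_eRk, ← ncard_def]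
  exact le_antisymm (ciSup_le' hle)
    (le_ciSup (f := fun J : {J : Set α // M.Indep J ∧ J ⊆ X} => J.1.ncard)
      ⟨_, forall_mem_range.2 hle⟩ ⟨I, hI.indep, hI.subset⟩)

lemma rank_eq_toNat_eRank : M.rank = M.eRank.toNat := by
  rw [rank, rkSet_eq_toNat_eRk, eRk_ground]

lemma rkSet_mono (hXY : X ⊆ Y) : M.rkSet X ≤ M.rkSet Y := by
  simp only [rkSet_eq_toNat_eRk]
  exact ENat.toNat_le_toNat (M.eRk_mono hXY) (M.isRkFinite_set Y).eRk_lt_top.ne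

lemma rkSet_le_rank (X : Set α) : M.rkSet X ≤ M.rank := by
  rw [rkSet_eq_toNat_eRk, rank_eq_toNat_eRank]
  exact ENat.toNat_le_toNat (M.eRk_le_eRank X) (M.eRank_ne_top_iff.2 ‹_›)

lemma rkSet_closure (X : Set α) : M.rkSet (M.closure X) = M.rkSet X := by
  simp only [rkSet_eq_toNat_eRk, eRk_closure_eq]

lemma restrict_rkSet (hXR : X ⊆ R) : (M ↾ R).rkSet X = M.rkSet X := by
  simp only [rkSet_eq_toNat_eRk, restrict_eRk_eq _ hXR]

lemma restrict_rank (R : Set α) : (M ↾ R).rank = M.rkSet R :=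
  restrict_rkSet subset_rfl

lemma contract_rkSet_add_rkSet (hXC : Disjoint X C) :
    (M ／ C).rkSet X + M.rkSet C = M.rkSet (X ∪ C) := by
  simp only [rkSet_eq_toNat_eRk, ← contract_eRk_add_eRk M hXC]
  exact (ENat.toNat_add ((M ／ C).isRkFinite_set X).eRk_lt_top.ne
    (M.isRkFinite_set C).eRk_lt_top.ne).symm

lemma contract_rank_add_rkSet (hC : C ⊆ M.E) : (M ／ C).rank + M.rkSet C = M.rank := by
  rw [rank, contract_ground, contract_rkSet_add_rkSet disjoint_sdiff_left,
    sdiff_union_of_subset hC]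
  rfl

end RankFinite

abbrev Flats (M : Matroid α) : Type _ := {F : Set α // M.IsFlat F}

def flatClosure (M : Matroid α) (X : Set α) : M.Flats := ⟨M.closure X, M.isFlat_closure X⟩

lemma flatClosure_le_iff {F : M.Flats} (hX : X ⊆ M.E) : M.flatClosure X ≤ F ↔ X ⊆ F := by
  have h := M.closure_subset_closure_iff_subset_closure (Y := F.1) hX
  rwa [F.2.closure] at h

lemma le_flatClosure_union (F : M.Flats) (hX : X ⊆ M.E) : F ≤ M.flatClosure (F ∪ X) :=
  M.subset_closure_of_subset subset_union_left (union_subset F.2.subset_ground hX)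

instance : OrderTop M.Flats where
  top := ⟨M.E, M.ground_isFlat⟩
  le_top F := F.2.subset_ground

instance [M.Finite] : Finite M.Flats :=
  (M.ground_finite.finite_subsets.subset fun _ hF => hF.subset_ground).to_subtype

noncomputable instance [M.Finite] : Fintype M.Flats := Fintype.ofFinite _

noncomputable instance [M.Finite] : LocallyFiniteOrder M.Flats := by
  classical exact Fintype.toLocallyFiniteOrder

open IncidenceAlgebra
open scoped Classical

section Mobius

variable (𝕜 : Type*) [Ring 𝕜]

noncomputable def closureMobius (M : Matroid α) : IncidenceAlgebra 𝕜 M.Flats where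
  toFun F H := ∑ᶠ (B : Set α) (_ : B ⊆ H.1 \ F.1 ∧ M.flatClosure (F ∪ B) = H), (-1 : 𝕜) ^ B.ncard
  eq_zero_of_not_le' F H hFH := by
    refine finsum_eq_zero_of_forall_eq_zero fun B => ?_
    rw [finsum_eq_if, if_neg]
    rintro ⟨hB, hcl⟩
    apply hFH
    rw [← hcl]
    exact le_flatClosure_union F (hB.trans (sdiff_subset.trans H.2.subset_ground))

variable {𝕜}

lemma finsum_subset_sdiff_eq_sum_Icc [M.Finite] {F K : M.Flats} (hFK : F ≤ K)
    (g : M.Flats → 𝕜) :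
    ∑ᶠ (B : Set α) (_ : B ⊆ K.1 \ F.1), (-1 : 𝕜) ^ B.ncard * g (M.flatClosure (F ∪ B))
      = ∑ H ∈ Finset.Icc F K, closureMobius 𝕜 M F H * g H := by
  have hfin := M.set_finite (K.1 \ F.1) (sdiff_subset.trans K.2.subset_ground)
  have hmaps : ∀ B ∈ hfin.powerset.toFinset, M.flatClosure (F ∪ B) ∈ Finset.Icc F K := by
    intro B hB
    rw [Finite.mem_toFinset, mem_powerset_iff] at hB
    have hBE : B ⊆ M.E := hB.trans (sdiff_subset.trans K.2.subset_ground)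
    rw [Finset.mem_Icc, flatClosure_le_iff (union_subset F.2.subset_ground hBE)]
    exact ⟨le_flatClosure_union F hBE, union_subset hFK (hB.trans sdiff_subset)⟩
  rw [finsum_subset_eq_sum hfin, ← Finset.sum_fiberwise_of_maps_to hmaps]
  refine Finset.sum_congr rfl fun H hH => ?_
  rw [Finset.sum_congr rfl fun B hB => by rw [(Finset.mem_filter.1 hB).2], ← Finset.sum_mul]
  congr 1
  refine (finsum_cond_eq_sum_of_cond_iff _ fun {B} _ => ?_).symm
  rw [Finset.mem_filter, Finite.mem_toFinset, mem_powerset_iff]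
  refine ⟨fun ⟨hB, hcl⟩ => ⟨hB.trans (sdiff_subset_sdiff_left (Finset.mem_Icc.1 hH).2), hcl⟩,
    fun ⟨hB, hcl⟩ => ⟨subset_sdiff.2 ⟨?_, (subset_sdiff.1 hB).2⟩, hcl⟩⟩
  rw [← hcl]
  exact M.subset_closure_of_subset subset_union_right
    (union_subset F.2.subset_ground (hB.trans (sdiff_subset.trans K.2.subset_ground)))

lemma closureMobius_mul_zeta [M.Finite] : closureMobius 𝕜 M * zeta 𝕜 = 1 := by
  ext F K hFK
  calc (closureMobius 𝕜 M * zeta 𝕜 : IncidenceAlgebra 𝕜 M.Flats) F K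
        = ∑ H ∈ Finset.Icc F K, closureMobius 𝕜 M F H * 1 :=
        Finset.sum_congr rfl fun H hH => by rw [zeta_of_le (Finset.mem_Icc.1 hH).2]
    _ = ∑ᶠ (B : Set α) (_ : B ⊆ K.1 \ F.1), (-1 : 𝕜) ^ B.ncard * 1 :=
        (finsum_subset_sdiff_eq_sum_Icc hFK _).symm
    _ = if K.1 \ F.1 = ∅ then 1 else 0 := by
        simp only [mul_one]
        exact finsum_subset_neg_one_pow_ncard
          (M.set_finite _ (sdiff_subset.trans K.2.subset_ground))
    _ = (1 : IncidenceAlgebra 𝕜 M.Flats) F K :=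
        if_congr (sdiff_eq_empty.trans ⟨hFK.antisymm, fun h => h ▸ subset_rfl⟩) rfl rfl

lemma closureMobius_eq_mu [M.Finite] : closureMobius 𝕜 M = mu 𝕜 :=
  left_inv_eq_right_inv closureMobius_mul_zeta zeta_mul_mu

end Mobius

lemma pow_rkSet_mul_charPoly_restrict [M.RankFinite] (hR : R.Finite) {t : ℚ} (ht : t ≠ 0) :
    t ^ M.rkSet R * (M ↾ R).charPoly (1 / t)
      = ∑ᶠ (A : Set α) (_ : A ⊆ R), (-1 : ℚ) ^ A.ncard * t ^ M.rkSet A := by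
  rw [charPoly, restrict_ground_eq, finsum_subset_eq_sum hR, finsum_subset_eq_sum hR,
    Finset.mul_sum]
  refine Finset.sum_congr rfl fun A hA => ?_
  rw [Finite.mem_toFinset, mem_powerset_iff] at hA
  rw [restrict_rank, restrict_rkSet hA, one_div_pow, pow_sub₀ t ht (rkSet_mono hA)]
  field_simp

lemma charPoly_contract_eq_sum_mu [M.Finite] (F : M.Flats) (t : ℚ) :
    (M ／ F.1).charPoly t = ∑ H ∈ Finset.Ici F, mu ℚ F H * t ^ (M.rank - M.rkSet H) := by
  have hexp : ∀ B ⊆ (⊤ : M.Flats).1 \ F.1, (M ／ F.1).rank - (M ／ F.1).rkSet B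
      = M.rank - M.rkSet (M.flatClosure (F ∪ B)) := fun B hB => by
    have hB := contract_rkSet_add_rkSet (M := M) (disjoint_of_subset_left hB disjoint_sdiff_left)
    have hF := contract_rank_add_rkSet (M := M) F.2.subset_ground
    rw [flatClosure, rkSet_closure, union_comm]
    omega
  rw [← Finset.Icc_top, ← closureMobius_eq_mu, ← finsum_subset_sdiff_eq_sum_Icc le_top]
  exact finsum_congr fun B => finsum_congr fun hB => by rw [hexp B hB]

lemma sum_Ici_charPoly_contract [M.Finite] (G : M.Flats) (t : ℚ) :
    ∑ F ∈ Finset.Ici G, (M ／ F.1).charPoly t = t ^ (M.rank - M.rkSet G) := by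
  calc ∑ F ∈ Finset.Ici G, (M ／ F.1).charPoly t
      = ∑ F ∈ Finset.Ici G, ∑ H ∈ Finset.Ici F, mu ℚ F H * t ^ (M.rank - M.rkSet H) :=
        Finset.sum_congr rfl fun F _ => charPoly_contract_eq_sum_mu F t
    _ = ∑ H ∈ Finset.Ici G, ∑ F ∈ Finset.Icc G H, mu ℚ F H * t ^ (M.rank - M.rkSet H) :=
        Finset.sum_comm' fun F H => by
          simp only [Finset.mem_Ici, Finset.mem_Icc]
          exact ⟨fun h => ⟨h, h.1.trans h.2⟩, fun h => h.1⟩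
    _ = ∑ H ∈ Finset.Ici G, if G = H then t ^ (M.rank - M.rkSet H) else 0 :=
        Finset.sum_congr rfl fun H _ => by
          rw [← Finset.sum_mul, sum_Icc_mu_left, ite_mul, one_mul, zero_mul]
    _ = t ^ (M.rank - M.rkSet G) := by simp

lemma sum_flats_charPoly_convolution [M.Finite] {t : ℚ} (ht : t ≠ 0) :
    ∑ F : M.Flats, t ^ M.rkSet F * (M ↾ F).charPoly (1 / t) * (M ／ F.1).charPoly t
      = t ^ M.rank * ∑ᶠ (A : Set α) (_ : A ⊆ M.E), (-1 : ℚ) ^ A.ncard := by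
  have hfin (F : M.Flats) : F.1.Finite := M.set_finite _ F.2.subset_ground
  calc ∑ F : M.Flats, t ^ M.rkSet F * (M ↾ F).charPoly (1 / t) * (M ／ F.1).charPoly t
      = ∑ F : M.Flats, ∑ A ∈ (hfin F).powerset.toFinset,
          (-1 : ℚ) ^ A.ncard * t ^ M.rkSet A * (M ／ F.1).charPoly t := by
        refine Finset.sum_congr rfl fun F _ => ?_
        rw [pow_rkSet_mul_charPoly_restrict (hfin F) ht, finsum_subset_eq_sum (hfin F),
          Finset.sum_mul]
    _ = ∑ A ∈ M.ground_finite.powerset.toFinset, ∑ F ∈ Finset.Ici (M.flatClosure A),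
          (-1 : ℚ) ^ A.ncard * t ^ M.rkSet A * (M ／ F.1).charPoly t :=
        Finset.sum_comm' fun F A => by
          simp only [Finset.mem_univ, true_and, Finite.mem_toFinset, mem_powerset_iff,
            Finset.mem_Ici]
          refine ⟨fun hA => ?_, fun ⟨hAF, hA⟩ => ?_⟩
          · have hAE := hA.trans F.2.subset_ground
            exact ⟨(flatClosure_le_iff hAE).2 hA, hAE⟩
          · exact (flatClosure_le_iff hA).1 hAF
    _ = ∑ A ∈ M.ground_finite.powerset.toFinset, t ^ M.rank * (-1 : ℚ) ^ A.ncard := by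
        refine Finset.sum_congr rfl fun A _ => ?_
        rw [← Finset.mul_sum, sum_Ici_charPoly_contract, flatClosure, rkSet_closure, mul_assoc,
          ← pow_add, Nat.add_sub_cancel' (rkSet_le_rank A), mul_comm]
    _ = t ^ M.rank * ∑ᶠ (A : Set α) (_ : A ⊆ M.E), (-1 : ℚ) ^ A.ncard := by
        rw [finsum_subset_eq_sum M.ground_finite, Finset.mul_sum]

end Matroid

open Matroid Set

theorem charPoly_convolution_eq_zero_general (M : Matroid α) (hfin : M.E.Finite)
    (hne : M.E.Nonempty) :
    ∀ t : ℚ, t ≠ 0 →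
      ∑ᶠ (F : Set α) (_ : M.IsFlat F),
        t ^ M.rkSet F * (M ↾ F).charPoly (1 / t) * (M.con F).charPoly t = 0 := by
  intro t ht
  have : M.Finite := ⟨hfin⟩
  simp only [con_eq_contract]
  rw [← finsum_subtype_eq_finsum_cond, finsum_eq_sum_of_fintype,
    sum_flats_charPoly_convolution ht,
    finsum_subset_neg_one_pow_ncard hfin, if_neg hne.ne_empty, mul_zero]

/-- For any nonempty loopless matroid `M`,
`∑_{F ∈ L(M)} t^(rk F) χ_{M^F}(1/t) χ_{M_F}(t) = 0` as rational functions of `t`. -/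
theorem charPoly_convolution_eq_zero (M : Matroid α) (hfin : M.E.Finite)
    (hl : M.IsLoopless) (hne : M.E.Nonempty) :
    ∀ t : ℚ, t ≠ 0 →
      ∑ᶠ (F : Set α) (_ : M.IsFlat F),
        t ^ M.rkSet F * (M ↾ F).charPoly (1 / t) * (M.con F).charPoly t = 0 :=
  charPoly_convolution_eq_zero_general M hfin hne
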